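/- Let H be a connected finite simple block graph and let B be a block of H with vertex set V(B) = {u_1, u_2, …, u_k}. For each 1 ≤ i ≤ k, let G_i denote the connected component containing u_i of the subgraph of H induced by (V(H) ∖ V(B)) ∪ {u_i}. Suppose S_1 ⊆ V(G_1) is a dominating set of G_1 with u_1 ∈ S_1, and suppose for each 2 ≤ i ≤ k that S_i ⊆ V(G_i) dominates every vertex of V(G_i) ∖ ({u_i} ∪ S_i). Let J ⊆ {2, …, k} be such that for each i ∈ J we have u_i ∈ S_i and G_i[S_i ∖ {u_i}] has a perfect matching, and for each i ∈ {2, …, k} ∖ J the induced subgraph G_i[S_i] has a perfect matching. Set S = S_1 ∪ S_2 ∪ … ∪ S_k. If either (a) G_1[S_1 ∖ {u_1}] has a perfect matching and |J| is odd, or (b) G_1[S_1] has a perfect matching and |J| is even, then S is a paired-dominating set of H containing u_1. -/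

import Mathlib

open SimpleGraph

variable {V : Type*}

/-- `S` is a dominating set of `G`. -/
def Dominating (G : SimpleGraph V) (S : Set V) : Prop :=
  ∀ v ∉ S, ∃ u ∈ S, G.Adj v u

/-- Within the subgraph of `G` induced by `A` (for `S ⊆ A`), the set `S` dominates
every vertex of `A \ S`. -/
def DominatingOn (G : SimpleGraph V) (A S : Set V) : Prop :=
  ∀ v ∈ A, v ∉ S → ∃ w ∈ S, G.Adj v w

/-- The induced subgraph `G[S]` has a perfect matching, i.e. there is a matching of `G`
whose vertex set is exactly `S`. -/
def HasPerfectMatchingOn (G : SimpleGraph V) (S : Set V) : Prop :=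
  ∃ M : G.Subgraph, M.verts = S ∧ M.IsMatching

/-- `S` is a paired-dominating set of `G`. -/
def PairedDominating (G : SimpleGraph V) (S : Set V) : Prop :=
  Dominating G S ∧ HasPerfectMatchingOn G S

/-- `v` is a cut vertex: deleting it disconnects the graph. -/
def IsCutVertex (G : SimpleGraph V) (v : V) : Prop :=
  ¬ (G.induce ({v}ᶜ : Set V)).Preconnected

/-- The graph has no cut vertex. -/
def HasNoCutVertex (G : SimpleGraph V) : Prop :=
  ∀ v : V, ¬ IsCutVertex G v

/-- `B` is a block of `G`: a maximal vertex set inducing a connected subgraph with no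
cut vertex. -/
def IsBlock (G : SimpleGraph V) (B : Set V) : Prop :=
  (G.induce B).Connected ∧ HasNoCutVertex (G.induce B) ∧
    ∀ B' : Set V, B ⊆ B' → (G.induce B').Connected → HasNoCutVertex (G.induce B') → B' = B

/-- `G` is a block graph: every block is a complete subgraph. -/
def IsBlockGraph (G : SimpleGraph V) : Prop :=
  ∀ B : Set V, IsBlock G B → B.Pairwise G.Adj

/-- The vertex set of the connected component containing `u` of the subgraph of `G`
induced by `A`. -/
def componentOf (G : SimpleGraph V) (A : Set V) (u : V) : Set V :=
  {v | ∃ (hu : u ∈ A) (hv : v ∈ A), (G.induce A).Reachable ⟨u, hu⟩ ⟨v, hv⟩}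

/-!
The block `B` is a clique (`H` is a block graph), so the vertices `u_i` left unmatched by the
pieces `S_i` can be matched among themselves: they are `u_1` and the `u_i` with `i ∈ J` in case
(a), only the latter in case (b), an even number either way. The pieces do not overlap because
the components `G_i` are pairwise disjoint: a common vertex of `G_a` and `G_b` yields an `a`–`b`
path through vertices outside `B` which, added to `B`, gives a larger connected set without cut
vertex. Domination is immediate: `u_1` dominates the clique `B`, and every vertex outside `B` lies
in some `G_i`.
-/

namespace SimpleGraph

open Function

variable {G : SimpleGraph V}

section componentOf

variable {A : Set V} {u v w : V}

lemma self_mem_componentOf (hu : u ∈ A) : u ∈ componentOf G A u :=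
  ⟨hu, hu, .refl _⟩

lemma componentOf_subset : componentOf G A u ⊆ A :=
  fun _ ⟨_, hv, _⟩ => hv

lemma mem_componentOf_of_adj (hw : w ∈ componentOf G A u) (hv : v ∈ A) (hwv : G.Adj w v) :
    v ∈ componentOf G A u :=
  let ⟨hu, _, huw⟩ := hw
  ⟨hu, hv, huw.trans (G := G.induce A) (Adj.reachable hwv)⟩

lemma exists_walk_of_mem_componentOf (hv : v ∈ componentOf G A u) :
    ∃ p : G.Walk u v, ∀ x ∈ p.support, x ∈ A := by
  obtain ⟨_, _, ⟨p⟩⟩ := hv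
  refine ⟨p.map (Embedding.induce A).toHom, fun x hx => ?_⟩
  obtain ⟨y, -, rfl⟩ := List.mem_map.mp ((Walk.support_map _ p) ▸ hx)
  exact y.2

lemma Preconnected.exists_mem_componentOf (hG : G.Preconnected) {B : Set V} {b : V}
    (hb : b ∈ B) (hv : v ∉ B) : ∃ a ∈ B, v ∈ componentOf G (Bᶜ ∪ {a}) a := by
  obtain ⟨p⟩ := hG v b
  induction p with
  | nil => exact absurd hb hv
  | @cons v x _ hvx p ih =>
    by_cases hx : x ∈ B
    · exact ⟨x, hx, mem_componentOf_of_adj (self_mem_componentOf (Or.inr rfl)) (Or.inl hv)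
        hvx.symm⟩
    · obtain ⟨a, ha, hxa⟩ := ih hb hx
      exact ⟨a, ha, mem_componentOf_of_adj hxa (Or.inl hv) hvx.symm⟩

end componentOf

lemma preconnected_induce_of_forall_exists_walk_to_clique {C D : Set V}
    (hC : C.Pairwise G.Adj) (hCD : C ⊆ D)
    (h : ∀ y ∈ D, ∃ c ∈ C, ∃ p : G.Walk y c, ∀ x ∈ p.support, x ∈ D) :
    (G.induce D).Preconnected := by
  rintro ⟨y, hy⟩ ⟨z, hz⟩
  obtain ⟨c, hc, p, hp⟩ := h y hy
  obtain ⟨c', hc', q, hq⟩ := h z hz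
  have hcc' : (G.induce D).Reachable ⟨c, hCD hc⟩ ⟨c', hCD hc'⟩ := by
    rcases eq_or_ne c c' with rfl | hne
    · rfl
    · exact Adj.reachable (hC hc hc' hne)
  exact (p.induce D hp).reachable.trans (hcc'.trans (q.induce D hq).reachable.symm)

lemma hasNoCutVertex_induce {s : Set V} (h : ∀ x ∈ s, (G.induce (s \ {x})).Preconnected) :
    HasNoCutVertex (G.induce s) := by
  intro x hcut
  let f : G.induce (s \ {x.1}) →g (G.induce s).induce {x}ᶜ :=
    ⟨fun z => ⟨⟨z.1, z.2.1⟩, fun hz => z.2.2 (congrArg Subtype.val hz)⟩, id⟩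
  refine hcut ((h x x.2).map f ?_)
  rintro ⟨⟨z, hz⟩, hzx⟩
  exact ⟨⟨z, hz, fun h => hzx (Subtype.ext h)⟩, rfl⟩

lemma Walk.IsPath.exists_walk_to_endpoint_avoiding {a b x y : V} {p : G.Walk a b}
    (hp : p.IsPath) (hy : y ∈ p.support) (hxy : x ≠ y) :
    ∃ e ∈ ({a, b} : Set V), ∃ q : G.Walk y e,
      x ∉ q.support ∧ ∀ z ∈ q.support, z ∈ p.support := by
  obtain ⟨q, r, rfl⟩ := Walk.mem_support_iff_exists_append.mp hy
  have hnodup := hp.support_nodup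
  rw [Walk.support_append] at hnodup
  by_cases hxq : x ∈ q.support
  · refine ⟨b, Or.inr rfl, r, fun hxr => ?_, fun z hz => by simp [hz]⟩
    rw [← r.cons_tail_support] at hxr
    exact List.disjoint_of_nodup_append hnodup hxq ((List.mem_cons.mp hxr).resolve_left hxy)
  · exact ⟨a, Or.inl rfl, q.reverse, by simpa using hxq, fun z hz => by simp_all⟩

theorem IsBlock.support_subset_of_isPath {B : Set V} (hB : IsBlock G B)
    (hBc : B.Pairwise G.Adj) {a b : V} (ha : a ∈ B) (hb : b ∈ B) {p : G.Walk a b}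
    (hp : p.IsPath) : ∀ x ∈ p.support, x ∈ B := by
  classical
  set B' := B ∪ {x | x ∈ p.support}
  have hconn : (G.induce B').Connected := by
    have : Nonempty B' := ⟨⟨a, Or.inl ha⟩⟩
    refine ⟨preconnected_induce_of_forall_exists_walk_to_clique hBc Set.subset_union_left ?_⟩
    rintro y (hy | hy)
    · exact ⟨y, hy, .nil, fun z hz => by rw [List.mem_singleton.mp hz]; exact Or.inl hy⟩
    · exact ⟨a, ha, (p.takeUntil y hy).reverse, fun z hz =>
        Or.inr (p.support_takeUntil_subset_support hy (by simpa using hz))⟩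
  have hcut : HasNoCutVertex (G.induce B') := by
    refine hasNoCutVertex_induce fun x _ => preconnected_induce_of_forall_exists_walk_to_clique
      (hBc.mono Set.sdiff_subset) (Set.sdiff_subset_sdiff_left Set.subset_union_left) ?_
    rintro y ⟨hy | hy, hyx⟩
    · exact ⟨y, ⟨hy, hyx⟩, .nil, fun z hz => by
        rw [List.mem_singleton.mp hz]; exact ⟨Or.inl hy, hyx⟩⟩
    · obtain ⟨e, he, q, hxq, hq⟩ :=
        hp.exists_walk_to_endpoint_avoiding hy (Ne.symm hyx)
      have heB : e ∈ B := by rcases he with rfl | rfl <;> assumption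
      refine ⟨e, ⟨heB, fun h => hxq (h ▸ q.end_mem_support)⟩, q, fun z hz =>
        ⟨Or.inr (hq z hz), fun h => hxq (h ▸ hz)⟩⟩
  intro x hx
  rw [← hB.2.2 B' Set.subset_union_left hconn hcut]
  exact Or.inr hx

theorem IsBlock.disjoint_componentOf {B : Set V} (hB : IsBlock G B) (hBc : B.Pairwise G.Adj)
    {a b : V} (ha : a ∈ B) (hb : b ∈ B) (hab : a ≠ b) :
    Disjoint (componentOf G (Bᶜ ∪ {a}) a) (componentOf G (Bᶜ ∪ {b}) b) := by
  classical
  rw [Set.disjoint_left]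
  intro w hwa hwb
  obtain ⟨p, hp⟩ := exists_walk_of_mem_componentOf hwa
  obtain ⟨q, hq⟩ := exists_walk_of_mem_componentOf hwb
  let W := p.append q.reverse
  have hnil : ¬ W.bypass.Nil := Walk.not_nil_of_ne hab
  have hsnd : W.bypass.snd ∈ B := hB.support_subset_of_isPath hBc ha hb W.bypass_isPath _
    (W.bypass.snd_mem_support_of_mem_edges (W.bypass.mk_start_snd_mem_edges hnil))
  -- The first edge of the `a`–`b` path lies in `B`, but `p` and `q` each meet `B` in one vertex.
  have hedge : s(a, W.bypass.snd) ∈ W.edges :=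
    W.edges_bypass_subset_edges (W.bypass.mk_start_snd_mem_edges hnil)
  rw [Walk.edges_append, List.mem_append, Walk.edges_reverse, List.mem_reverse] at hedge
  rcases hedge with he | he
  · rcases hp _ (p.snd_mem_support_of_mem_edges he) with h | h
    · exact h hsnd
    · exact G.irrefl ((Set.mem_singleton_iff.mp h) ▸ Walk.adj_snd hnil)
  · rcases hq _ (q.fst_mem_support_of_mem_edges he) with h | h
    · exact h ha
    · exact hab h

lemma dominating_iUnion_of_isClique {ι : Type*} {B : Set V} (hBc : B.Pairwise G.Adj)
    {A S : ι → Set V} {i₀ : ι} {b : V} (hb : b ∈ B) (hbS : b ∈ S i₀)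
    (hcover : ∀ v ∉ B, ∃ i, v ∈ A i)
    (hdom : ∀ i, ∀ v ∈ A i, v ∉ S i → v ∉ B → ∃ w ∈ S i, G.Adj v w) :
    Dominating G (⋃ i, S i) := by
  intro v hv
  have hvS : ∀ i, v ∉ S i := fun i hi => hv (Set.mem_iUnion_of_mem i hi)
  by_cases hvB : v ∈ B
  · exact ⟨b, Set.mem_iUnion_of_mem i₀ hbS, hBc hvB hb fun h => hvS i₀ (h ▸ hbS)⟩
  · obtain ⟨i, hvi⟩ := hcover v hvB
    obtain ⟨w, hw, hvw⟩ := hdom i v hvi (hvS i) hvB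
    exact ⟨w, Set.mem_iUnion_of_mem i hw, hvw⟩

lemma HasPerfectMatchingOn.union {S T : Set V} (hS : HasPerfectMatchingOn G S)
    (hT : HasPerfectMatchingOn G T) (hST : Disjoint S T) : HasPerfectMatchingOn G (S ∪ T) := by
  obtain ⟨M, rfl, hM⟩ := hS
  obtain ⟨N, rfl, hN⟩ := hT
  refine ⟨M ⊔ N, rfl, hM.sup hN ?_⟩
  rwa [hM.support_eq_verts, hN.support_eq_verts]

lemma HasPerfectMatchingOn.iUnion {ι : Type*} {S : ι → Set V}
    (h : ∀ i, HasPerfectMatchingOn G (S i)) (hS : Pairwise (Disjoint on S)) :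
    HasPerfectMatchingOn G (⋃ i, S i) := by
  choose M hMS hM using h
  refine ⟨⨆ i, M i, by simp [hMS], Subgraph.IsMatching.iSup hM fun i j hij => ?_⟩
  simpa only [(hM _).support_eq_verts, hMS] using hS hij

theorem hasPerfectMatchingOn_iUnion_of_isClique {ι : Type*} {B : Set V}
    (hBc : B.Pairwise G.Adj) {u : ι → V} (hu : Injective u) (huB : ∀ i, u i ∈ B)
    {S : ι → Set V} (hS : Pairwise (Disjoint on S)) (hSB : ∀ i, S i ⊆ Bᶜ ∪ {u i})
    (J : Finset ι) (hJ : Even J.card)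
    (hSJ : ∀ i ∈ J, u i ∈ S i ∧ HasPerfectMatchingOn G (S i \ {u i}))
    (hSnJ : ∀ i ∉ J, HasPerfectMatchingOn G (S i)) :
    HasPerfectMatchingOn G (⋃ i, S i) := by
  set U := u '' J
  have hUB : U ⊆ B := Set.image_subset_iff.mpr fun i _ => huB i
  have hSU : ∀ i, ∀ v ∈ S i, v ∈ U → v = u i := fun i v hv hvU =>
    (hSB i hv).resolve_left (not_not.mpr (hUB hvU))
  have hUmatch : HasPerfectMatchingOn G U := by
    refine (IsClique.even_iff_exists_isMatching (hBc.mono hUB) (J.finite_toSet.image u)).mp ?_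
    rwa [Set.ncard_image_of_injective _ hu, Set.ncard_coe_finset]
  have hdiff : ∀ i, HasPerfectMatchingOn G (S i \ U) := by
    intro i
    by_cases hi : i ∈ J
    · convert (hSJ i hi).2 using 1
      ext v
      refine ⟨fun ⟨hv, hvU⟩ => ⟨hv, fun h => hvU (h ▸ Set.mem_image_of_mem u hi)⟩,
        fun ⟨hv, hvu⟩ => ⟨hv, fun hvU => hvu (hSU i v hv hvU)⟩⟩
    · convert hSnJ i hi using 1
      refine sdiff_eq_left.mpr (Set.disjoint_left.mpr fun v hv hvU => hi ?_)
      exact hu.mem_set_image.mp (hSU i v hv hvU ▸ hvU)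
  have hUS : U ⊆ ⋃ i, S i := Set.image_subset_iff.mpr fun i hi =>
    Set.mem_iUnion_of_mem i (hSJ i hi).1
  rw [← Set.sdiff_union_of_subset hUS, Set.iUnion_sdiff]
  exact (HasPerfectMatchingOn.iUnion hdiff fun i j hij => (hS hij).mono Set.sdiff_subset
    Set.sdiff_subset).union hUmatch (Set.disjoint_iUnion_left.mpr fun i => Set.disjoint_sdiff_left)

end SimpleGraph

theorem stmt_14_general {V : Type*} (H : SimpleGraph V) (hH : H.Connected)
    (hbg : IsBlockGraph H) (B : Set V) (hB : IsBlock H B)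
    (k : ℕ) (hk : 0 < k) (u : Fin k → V) (huinj : Function.Injective u)
    (hurange : Set.range u = B)
    (G' : Fin k → Set V) (hG' : ∀ i : Fin k, G' i = componentOf H (Bᶜ ∪ {u i}) (u i))
    (S : Fin k → Set V) (hSsub : ∀ i : Fin k, S i ⊆ G' i)
    (hS₁dom : DominatingOn H (G' ⟨0, hk⟩) (S ⟨0, hk⟩))
    (hS₁u : u ⟨0, hk⟩ ∈ S ⟨0, hk⟩)
    (hSidom : ∀ i : Fin k, i ≠ ⟨0, hk⟩ →
      ∀ v ∈ G' i, v ∉ S i → v ≠ u i → ∃ w ∈ S i, H.Adj v w)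
    (J : Finset (Fin k)) (hJ₁ : ⟨0, hk⟩ ∉ J)
    (hJ : ∀ i ∈ J, u i ∈ S i ∧ HasPerfectMatchingOn H (S i \ {u i}))
    (hnJ : ∀ i : Fin k, i ≠ ⟨0, hk⟩ → i ∉ J → HasPerfectMatchingOn H (S i))
    (hab : (HasPerfectMatchingOn H (S ⟨0, hk⟩ \ {u ⟨0, hk⟩}) ∧ Odd J.card) ∨
      (HasPerfectMatchingOn H (S ⟨0, hk⟩) ∧ Even J.card)) :
    PairedDominating H (⋃ i : Fin k, S i) ∧ u ⟨0, hk⟩ ∈ ⋃ i : Fin k, S i := by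
  set i₀ : Fin k := ⟨0, hk⟩
  have hBc : B.Pairwise H.Adj := hbg B hB
  have huB : ∀ i, u i ∈ B := fun i => hurange ▸ Set.mem_range_self i
  have hcover : ∀ v ∉ B, ∃ i, v ∈ G' i := fun v hv => by
    obtain ⟨a, ha, hva⟩ := hH.preconnected.exists_mem_componentOf (huB i₀) hv
    obtain ⟨i, rfl⟩ := hurange.symm ▸ ha
    exact ⟨i, hG' i ▸ hva⟩
  have hdom : Dominating H (⋃ i, S i) := by
    refine dominating_iUnion_of_isClique hBc (huB i₀) hS₁u hcover fun i v hv hvS hvB => ?_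
    by_cases hi : i = i₀
    · exact hi ▸ hS₁dom v (hi ▸ hv) (hi ▸ hvS)
    · exact hSidom i hi v hv hvS fun h => hvB (h ▸ huB i)
  have hSd : Pairwise (Function.onFun Disjoint S) := fun i j hij =>
    ((hG' i).symm ▸ (hG' j).symm ▸ hB.disjoint_componentOf hBc (huB i) (huB j)
      (huinj.ne hij)).mono (hSsub i) (hSsub j)
  refine ⟨⟨hdom, ?_⟩, Set.mem_iUnion_of_mem i₀ hS₁u⟩
  have hmatch := hasPerfectMatchingOn_iUnion_of_isClique hBc huinj huB hSd
    fun i => (hSsub i).trans (hG' i ▸ componentOf_subset)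
  rcases hab with ⟨h₀, hodd⟩ | ⟨h₀, heven⟩
  · refine hmatch (insert i₀ J) (by rwa [Finset.card_insert_of_notMem hJ₁, Nat.even_add_one,
      Nat.not_even_iff_odd]) (fun i hi => ?_) fun i hi => ?_
    · rcases Finset.mem_insert.mp hi with rfl | hi
      exacts [⟨hS₁u, h₀⟩, hJ i hi]
    · exact hnJ i (fun h => hi (h ▸ Finset.mem_insert_self _ _))
        (hi ∘ Finset.mem_insert_of_mem)
  · refine hmatch J heven hJ fun i hi => ?_
    by_cases hi₀ : i = i₀
    exacts [hi₀ ▸ h₀, hnJ i hi₀ hi]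

theorem stmt_14 {V : Type*} [Fintype V] (H : SimpleGraph V) (hH : H.Connected)
    (hbg : IsBlockGraph H) (B : Set V) (hB : IsBlock H B)
    (k : ℕ) (hk : 0 < k) (u : Fin k → V) (huinj : Function.Injective u)
    (hurange : Set.range u = B)
    (G' : Fin k → Set V) (hG' : ∀ i : Fin k, G' i = componentOf H (Bᶜ ∪ {u i}) (u i))
    (S : Fin k → Set V) (hSsub : ∀ i : Fin k, S i ⊆ G' i)
    (hS₁dom : DominatingOn H (G' ⟨0, hk⟩) (S ⟨0, hk⟩))
    (hS₁u : u ⟨0, hk⟩ ∈ S ⟨0, hk⟩)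
    (hSidom : ∀ i : Fin k, i ≠ ⟨0, hk⟩ →
      ∀ v ∈ G' i, v ∉ S i → v ≠ u i → ∃ w ∈ S i, H.Adj v w)
    (J : Finset (Fin k)) (hJ₁ : ⟨0, hk⟩ ∉ J)
    (hJ : ∀ i ∈ J, u i ∈ S i ∧ HasPerfectMatchingOn H (S i \ {u i}))
    (hnJ : ∀ i : Fin k, i ≠ ⟨0, hk⟩ → i ∉ J → HasPerfectMatchingOn H (S i))
    (hab : (HasPerfectMatchingOn H (S ⟨0, hk⟩ \ {u ⟨0, hk⟩}) ∧ Odd J.card) ∨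
      (HasPerfectMatchingOn H (S ⟨0, hk⟩) ∧ Even J.card)) :
    PairedDominating H (⋃ i : Fin k, S i) ∧ u ⟨0, hk⟩ ∈ ⋃ i : Fin k, S i :=
  stmt_14_general H hH hbg B hB k hk u huinj hurange G' hG' S hSsub hS₁dom hS₁u hSidom J hJ₁ hJ hnJ
    hab
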